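/- Let p be an odd prime with p not divisible by 3. Then 2·∑_{0<x<p, x even} ∑_{0<r, r ∣ p²−x²} χ(r) equals p−3 if p ≡ 1 (mod 3), and equals p+1 if p ≡ 2 (mod 3). Here the inner sum runs over the positive divisors r of p² − x². -/

import Mathlib

/-!
Write `F(n) = ∑_{r ∣ n} χ(r)`; it is multiplicative with `F(2) = 0`. For even `x`, the factors
`p - x` and `p + x` of `p² - x²` are coprime, so with `a = p - x` the sum is half of the
convolution `∑_{0<a<2p} F(a) F(2p - a)` minus its middle term `F(p)²`: the terms with `a` even
vanish, since one of `a`, `2p - a` is `≡ 2 (mod 4)`.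

Expanding `F`, the convolution at `n` counts the quadruples `d α + e β = n` with weight
`χ(d) χ(e) = [d ≡ e] - [d + e ≡ 0] (mod 3)`. When `3 ∤ n`, a Liouville-type bijection matches
the quadruples with `d + e ≡ 0` to those with `d ≡ e` and `α ≠ β`, so only the quadruples with
`α = β` and `d ≡ e` survive, and there are `(σ(n) - F(n)) / 3` of them. At `n = 2p` this is
`p + 1`, and `F(p) = 1 + χ(p)`.
-/

/-- The Kronecker symbol `(−3/·)` on positive integers: `χ(r) = 1` if `r ≡ 1 (mod 3)`,
`χ(r) = −1` if `r ≡ 2 (mod 3)`, and `χ(r) = 0` if `3 ∣ r`. -/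
def kroneckerNegThree (r : ℕ) : ℤ :=
  if r % 3 = 1 then 1 else if r % 3 = 2 then -1 else 0

open Finset ArithmeticFunction
open scoped ArithmeticFunction.zeta ArithmeticFunction.sigma

lemma kroneckerNegThree_mul (m n : ℕ) :
    kroneckerNegThree (m * n) = kroneckerNegThree m * kroneckerNegThree n := by
  unfold kroneckerNegThree
  rw [Nat.mul_mod]
  have hm := Nat.mod_lt m (show 3 > 0 by norm_num)
  have hn := Nat.mod_lt n (show 3 > 0 by norm_num)
  interval_cases m % 3 <;> interval_cases n % 3 <;> rfl

lemma kroneckerNegThree_mul_eq_sub (d e : ℕ) :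
    kroneckerNegThree d * kroneckerNegThree e =
      (if d % 3 = e % 3 then 1 else 0) - (if (d + e) % 3 = 0 then 1 else 0) := by
  unfold kroneckerNegThree
  rw [Nat.add_mod]
  have hd := Nat.mod_lt d (show 3 > 0 by norm_num)
  have he := Nat.mod_lt e (show 3 > 0 by norm_num)
  interval_cases d % 3 <;> interval_cases e % 3 <;> rfl

noncomputable def divisorSumKronecker : ArithmeticFunction ℤ :=
  (ζ : ArithmeticFunction ℤ) * ⟨kroneckerNegThree, rfl⟩

lemma divisorSumKronecker_apply (n : ℕ) :
    divisorSumKronecker n = ∑ r ∈ n.divisors, kroneckerNegThree r :=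
  coe_zeta_mul_apply

lemma isMultiplicative_divisorSumKronecker : divisorSumKronecker.IsMultiplicative :=
  isMultiplicative_zeta.natCast.mul ⟨rfl, fun _ => kroneckerNegThree_mul _ _⟩

lemma divisorSumKronecker_two : divisorSumKronecker 2 = 0 := by
  rw [divisorSumKronecker_apply]; decide

lemma divisorSumKronecker_prime {q : ℕ} (hq : q.Prime) :
    divisorSumKronecker q = 1 + kroneckerNegThree q := by
  rw [divisorSumKronecker_apply, Nat.Prime.sum_divisors hq, add_comm]
  rfl

lemma divisorSumKronecker_eq_zero_of_mod_four {n : ℕ} (hn : n % 4 = 2) :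
    divisorSumKronecker n = 0 := by
  obtain ⟨k, rfl⟩ : 2 ∣ n := by omega
  rw [isMultiplicative_divisorSumKronecker.map_mul_of_coprime
    (Nat.coprime_two_left.2 (by rw [Nat.odd_iff]; omega)), divisorSumKronecker_two, zero_mul]

lemma three_mul_card_filter_mod_three_add_kronecker (m : ℕ) (hm : ¬ 3 ∣ m) :
    3 * (#{d ∈ Ioo 0 m | d % 3 = 2 * m % 3} : ℤ) + kroneckerNegThree m = m := by
  have hcount := Nat.count_modEq_card m (show 0 < 3 by norm_num) (2 * m % 3)
  rw [Nat.count_eq_card_filter_range] at hcount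
  have : #{d ∈ Ioo 0 m | d % 3 = 2 * m % 3} = #{d ∈ range m | d ≡ 2 * m % 3 [MOD 3]} := by
    congr 1
    ext d
    simp only [mem_filter, mem_Ioo, mem_range]
    unfold Nat.ModEq
    omega
  rw [this, hcount]
  unfold kroneckerNegThree
  split_ifs <;> omega

def quadruples (n : ℕ) : Finset ((ℕ × ℕ) × (ℕ × ℕ)) :=
  (Ioo 0 n).biUnion fun a => a.divisorsAntidiagonal ×ˢ (n - a).divisorsAntidiagonal

lemma mem_quadruples {n d α e β : ℕ} :
    ((d, α), (e, β)) ∈ quadruples n ↔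
      d * α + e * β = n ∧ 0 < d ∧ 0 < α ∧ 0 < e ∧ 0 < β := by
  simp only [quadruples, mem_biUnion, mem_Ioo, mem_product, Nat.mem_divisorsAntidiagonal,
    Nat.pos_iff_ne_zero]
  constructor
  · rintro ⟨a, ⟨-, han⟩, ⟨rfl, hda⟩, heβ, he⟩
    rw [← heβ] at he
    simp only [ne_eq, mul_eq_zero, not_or] at hda he
    omega
  · rintro ⟨h, hd, hα, he, hβ⟩
    have : 0 < e * β := by positivity
    exact ⟨d * α, ⟨by positivity, by omega⟩, ⟨rfl, by positivity⟩, by omega, by omega⟩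

lemma sum_quadruples (n : ℕ) :
    ∑ y ∈ quadruples n, kroneckerNegThree y.1.1 * kroneckerNegThree y.2.1 =
      ∑ a ∈ Ioo 0 n, divisorSumKronecker a * divisorSumKronecker (n - a) := by
  rw [quadruples, sum_biUnion]
  · refine sum_congr rfl fun a _ => ?_
    rw [sum_product, divisorSumKronecker_apply, divisorSumKronecker_apply,
      ← Nat.sum_divisorsAntidiagonal (fun d _ => kroneckerNegThree d),
      ← Nat.sum_divisorsAntidiagonal (fun d _ => kroneckerNegThree d), sum_mul_sum]
  · intro a _ b _ hab
    simp only [Function.onFun, disjoint_left, mem_product, Nat.mem_divisorsAntidiagonal]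
    rintro y ⟨⟨rfl, -⟩, -⟩ ⟨⟨h, -⟩, -⟩
    exact hab h

lemma sum_quadruples_eq_card_sub_card (n : ℕ) :
    ∑ y ∈ quadruples n, kroneckerNegThree y.1.1 * kroneckerNegThree y.2.1 =
      #{y ∈ quadruples n | y.1.1 % 3 = y.2.1 % 3} -
        (#{y ∈ quadruples n | (y.1.1 + y.2.1) % 3 = 0} : ℤ) := by
  simp only [kroneckerNegThree_mul_eq_sub, sum_sub_distrib, sum_boole]

lemma card_filter_add_mod_three_eq {n : ℕ} (hn : ¬ 3 ∣ n) :
    #{y ∈ quadruples n | (y.1.1 + y.2.1) % 3 = 0} =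
      #{y ∈ quadruples n | y.1.1 % 3 = y.2.1 % 3 ∧ y.1.2 ≠ y.2.2} := by
  have hnd {d α e β : ℕ} (h : d * α + e * β = n) : ¬ (d % 3 = 0 ∧ e % 3 = 0) := by
    rintro ⟨hd, he⟩
    exact hn (h ▸ dvd_add ((Nat.dvd_of_mod_eq_zero hd).mul_right α)
      ((Nat.dvd_of_mod_eq_zero he).mul_right β))
  -- Subtract the smaller of `d`, `e` from the larger and add the larger one's weight to the
  -- smaller one's; in the image, whether `α < β` records which of the two cases occurred.
  refine card_nbij'
    (fun y => if y.2.1 < y.1.1 then ((y.1.1 - y.2.1, y.1.2), (y.2.1, y.2.2 + y.1.2))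
      else ((y.1.1, y.1.2 + y.2.2), (y.2.1 - y.1.1, y.2.2)))
    (fun y => if y.1.2 < y.2.2 then ((y.1.1 + y.2.1, y.1.2), (y.2.1, y.2.2 - y.1.2))
      else ((y.1.1, y.1.2 - y.2.2), (y.1.1 + y.2.1, y.2.2))) ?_ ?_ ?_ ?_
  all_goals
    rintro ⟨⟨d, α⟩, ⟨e, β⟩⟩ hy
    simp only [coe_filter, Set.mem_ofPred_eq, mem_quadruples] at hy
    obtain ⟨⟨h, hd, hα, he, hβ⟩, hmod⟩ := hy
    have hde := hnd h
    dsimp only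
  · split_ifs with hlt <;> simp only [coe_filter, Set.mem_ofPred_eq, mem_quadruples]
    · refine ⟨⟨?_, by omega, hα, he, by omega⟩, by omega, by omega⟩
      zify [hlt.le] at h ⊢; linear_combination h
    · refine ⟨⟨?_, hd, by omega, by omega, hβ⟩, by omega, by omega⟩
      zify [not_lt.1 hlt] at h ⊢; linear_combination h
  · split_ifs with hlt <;> simp only [coe_filter, Set.mem_ofPred_eq, mem_quadruples]
    · refine ⟨⟨?_, by omega, hα, he, by omega⟩, by omega⟩
      zify [hlt.le] at h ⊢; linear_combination h
    · refine ⟨⟨?_, hd, by omega, by omega, hβ⟩, by omega⟩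
      zify [not_lt.1 hlt] at h ⊢; linear_combination h
  all_goals
    split_ifs <;> dsimp only at * <;> simp only [Prod.mk.injEq, and_true, true_and] <;> omega

lemma card_filter_diagonal (n : ℕ) :
    #{y ∈ quadruples n | y.1.1 % 3 = y.2.1 % 3 ∧ y.1.2 = y.2.2} =
      ∑ m ∈ n.divisors, #{d ∈ Ioo 0 m | d % 3 = 2 * m % 3} := by
  rw [← Nat.sum_div_divisors n fun m => #{d ∈ Ioo 0 m | d % 3 = 2 * m % 3}]
  rw [card_eq_sum_card_fiberwise (f := fun y => y.1.2) (t := n.divisors)]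
  · refine sum_congr rfl fun α hα => ?_
    have hα0 : 0 < α := Nat.pos_of_mem_divisors hα
    obtain ⟨m, rfl⟩ := Nat.dvd_of_mem_divisors hα
    rw [filter_filter, Nat.mul_div_cancel_left m hα0]
    refine card_nbij' (fun y => y.1.1) (fun d => ((d, α), (m - d, α))) ?_ ?_ ?_ ?_
    · rintro ⟨⟨d, α'⟩, ⟨e, β⟩⟩ hy
      simp only [coe_filter, Set.mem_ofPred_eq, mem_quadruples, mem_Ioo] at hy ⊢
      obtain ⟨⟨h, hd, -, he, -⟩, ⟨hmod, rfl⟩, rfl⟩ := hy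
      have : m = d + e := Nat.eq_of_mul_eq_mul_left hα0 (by rw [← h]; ring)
      omega
    · intro d hd
      simp only [coe_filter, Set.mem_ofPred_eq, mem_Ioo, mem_quadruples, and_true] at hd ⊢
      refine ⟨⟨?_, by omega, hα0, by omega, hα0⟩, by omega⟩
      rw [← add_mul, Nat.add_sub_cancel' hd.1.2.le, mul_comm]
    · rintro ⟨⟨d, α'⟩, ⟨e, β⟩⟩ hy
      simp only [coe_filter, Set.mem_ofPred_eq, mem_quadruples] at hy
      obtain ⟨⟨h, hd, -, he, -⟩, ⟨hmod, rfl⟩, rfl⟩ := hy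
      have : m = d + e := Nat.eq_of_mul_eq_mul_left hα0 (by rw [← h]; ring)
      simp only [Prod.mk.injEq, and_true, true_and]
      omega
    · intro d _
      rfl
  · rintro ⟨⟨d, α⟩, ⟨e, β⟩⟩ hy
    simp only [coe_filter, Set.mem_ofPred_eq, mem_quadruples] at hy
    obtain ⟨⟨h, hd, hα, he, hβ⟩, -, rfl⟩ := hy
    simp only [mem_coe, Nat.mem_divisors]
    exact ⟨⟨d + e, by rw [← h]; ring⟩, by rw [← h]; positivity⟩

theorem three_mul_sum_mul_sub_eq_sigma_sub (n : ℕ) (hn : ¬ 3 ∣ n) :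
    3 * ∑ a ∈ Ioo 0 n, divisorSumKronecker a * divisorSumKronecker (n - a) =
      σ 1 n - divisorSumKronecker n := by
  have hdiag : ∑ a ∈ Ioo 0 n, divisorSumKronecker a * divisorSumKronecker (n - a) =
      #{y ∈ quadruples n | y.1.1 % 3 = y.2.1 % 3 ∧ y.1.2 = y.2.2} := by
    rw [← sum_quadruples, sum_quadruples_eq_card_sub_card, card_filter_add_mod_three_eq hn,
      ← card_filter_add_card_filter_not (s := {y ∈ quadruples n | y.1.1 % 3 = y.2.1 % 3})
        (fun y => y.1.2 = y.2.2), filter_filter, filter_filter]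
    push_cast
    ring
  rw [hdiag, card_filter_diagonal, sigma_one_apply, divisorSumKronecker_apply]
  push_cast
  rw [mul_sum, ← sum_sub_distrib]
  refine sum_congr rfl fun m hm => ?_
  have hm3 : ¬ 3 ∣ m := fun h => hn (h.trans (Nat.dvd_of_mem_divisors hm))
  rw [← three_mul_card_filter_mod_three_add_kronecker m hm3]
  ring

lemma sum_Ioo_two_mul_of_symm {M : Type*} [AddCommMonoid M] (f : ℕ → M) {p : ℕ} (hp : 0 < p)
    (hf : ∀ a ∈ Ioo 0 p, f (2 * p - a) = f a) :
    ∑ a ∈ Ioo 0 (2 * p), f a = 2 • ∑ a ∈ Ioo 0 p, f a + f p := by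
  have hsplit : Ioo 0 (2 * p) = Ioo 0 p ∪ insert p (Ioo p (2 * p)) := by
    ext a; simp only [mem_union, mem_insert, mem_Ioo]; omega
  have hreflect : ∑ a ∈ Ioo p (2 * p), f a = ∑ a ∈ Ioo 0 p, f a := by
    refine sum_nbij' (2 * p - ·) (2 * p - ·) ?_ ?_ ?_ ?_ ?_ <;> intro a ha <;>
      simp only [mem_Ioo] at ha ⊢
    · omega
    · omega
    · omega
    · omega
    · have := hf (2 * p - a) (by simp only [mem_Ioo]; omega)
      rwa [Nat.sub_sub_self ha.2.le] at this
  rw [hsplit, sum_union, sum_insert (by simp), hreflect, two_nsmul]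
  · abel
  · simp only [disjoint_left, mem_Ioo, mem_insert]; omega

lemma Nat.Prime.coprime_two_mul_sub {p a : ℕ} (hp : p.Prime) (ha : Odd a) (ha0 : 0 < a)
    (hap : a < p) : a.Coprime (2 * p - a) := by
  rw [Nat.coprime_sub_self_right (by omega), Nat.coprime_mul_iff_right]
  exact ⟨Nat.coprime_two_right.2 ha,
    Nat.Coprime.symm ((hp.coprime_iff_not_dvd).2 (Nat.not_dvd_of_pos_of_lt ha0 hap))⟩

lemma sum_filter_even_eq_sum_Ioo {p : ℕ} (hp : p.Prime) (hodd : Odd p) :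
    ∑ x ∈ Ioo 0 p with Even x, ∑ r ∈ (p ^ 2 - x ^ 2).divisors, kroneckerNegThree r =
      ∑ a ∈ Ioo 0 p, divisorSumKronecker a * divisorSumKronecker (2 * p - a) := by
  have hp_mod := Nat.odd_iff.1 hodd
  calc _ = ∑ a ∈ Ioo 0 p with Odd a,
        divisorSumKronecker a * divisorSumKronecker (2 * p - a) := by
        refine sum_nbij' (p - ·) (p - ·) ?_ ?_ ?_ ?_ ?_ <;> intro x hx <;>
          simp only [mem_filter, mem_Ioo, Nat.odd_iff, Nat.even_iff] at hx ⊢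
        · omega
        · omega
        · omega
        · omega
        · have hsq : p ^ 2 - x ^ 2 = (p - x) * (2 * p - (p - x)) := by
            rw [Nat.sq_sub_sq, mul_comm, show 2 * p - (p - x) = p + x by omega]
          rw [← divisorSumKronecker_apply, hsq,
            isMultiplicative_divisorSumKronecker.map_mul_of_coprime
              (hp.coprime_two_mul_sub (Nat.odd_iff.2 (by omega)) (by omega) (by omega))]
    _ = _ := by
        refine sum_filter_of_ne fun a ha hne => ?_
        simp only [mem_Ioo] at ha
        by_contra hev
        rw [Nat.not_odd_iff] at hev
        apply hne
        rcases (by omega : a % 4 = 2 ∨ (2 * p - a) % 4 = 2) with h | h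
        · rw [divisorSumKronecker_eq_zero_of_mod_four h, zero_mul]
        · rw [divisorSumKronecker_eq_zero_of_mod_four h, mul_zero]

/-- Let `p` be an odd prime not divisible by `3`.  Then
`2·∑_{0<x<p, x even} ∑_{0<r ∣ p²−x²} χ(r)` equals `p−3` if `p ≡ 1 (mod 3)` and
`p+1` if `p ≡ 2 (mod 3)`. -/
theorem sum_kronecker_even (p : ℕ) (hp : p.Prime) (hodd : Odd p) (h3 : ¬ 3 ∣ p) :
    (p % 3 = 1 →
      2 * ∑ x ∈ (Finset.Ioo 0 p).filter (fun x => Even x),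
        ∑ r ∈ (p ^ 2 - x ^ 2).divisors, kroneckerNegThree r = (p : ℤ) - 3) ∧
    (p % 3 = 2 →
      2 * ∑ x ∈ (Finset.Ioo 0 p).filter (fun x => Even x),
        ∑ r ∈ (p ^ 2 - x ^ 2).divisors, kroneckerNegThree r = (p : ℤ) + 1) := by
  have hcop : Nat.Coprime 2 p := Nat.coprime_two_left.2 hodd
  have key := three_mul_sum_mul_sub_eq_sigma_sub (2 * p) (by omega)
  rw [sum_Ioo_two_mul_of_symm _ hp.pos fun a ha => by
      rw [Nat.sub_sub_self (by simp only [mem_Ioo] at ha; omega), mul_comm],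
    ← sum_filter_even_eq_sum_Ioo hp hodd, show 2 * p - p = p by omega,
    isMultiplicative_sigma.map_mul_of_coprime hcop, sigma_one_apply, sigma_one_apply,
    Nat.prime_two.sum_divisors, hp.sum_divisors,
    isMultiplicative_divisorSumKronecker.map_mul_of_coprime hcop, divisorSumKronecker_two,
    divisorSumKronecker_prime hp, two_nsmul] at key
  push_cast at key
  constructor <;> intro hp3
  · rw [show kroneckerNegThree p = 1 by simp [kroneckerNegThree, hp3]] at key
    linarith
  · rw [show kroneckerNegThree p = -1 by simp [kroneckerNegThree, hp3]] at key
    linarith
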